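/- arXiv:1609.06151 — 5 statements merged into one kernel-verified Lean document; each statement's English description precedes it below -/
import Mathlib

section
/- Let E be the ℂ-algebra of ℂ-linear endomorphisms of the polynomial ring ℂ[x], let Y ∈ E be multiplication by x, Z ∈ E the formal derivative, H = Y∘Z, and for a fixed polynomial R ∈ ℂ[X] of degree d set G = R(H)∘Z (R evaluated at the endomorphism H). Then the following commutation relations hold in E: H∘Y − Y∘H = Y, H∘G − G∘H = −G, and G∘Y − Y∘G = R(H)∘(H+1) − R(H−1)∘H, i.e. [G,Y] = (ΔS)(H) where S(X) = R(X−1)·X and (ΔS)(X) = S(X+1) − S(X). -/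
open Polynomial Finset

noncomputable section

/-- `E` is the ℂ-algebra of ℂ-linear endomorphisms of `ℂ[x]`. -/
abbrev E := Module.End ℂ (Polynomial ℂ)

/-- `Y`: multiplication by `x`. -/
def Yop : E := LinearMap.mulLeft ℂ (X : Polynomial ℂ)

/-- `Z`: the formal derivative. -/
def Zop : E := Polynomial.derivative

/-- `H = Y ∘ Z`. -/
def Hop : E := Yop * Zop

/-- `G = R(H) ∘ Z`. -/
def Gop (R : Polynomial ℂ) : E := aeval Hop R * Zop

/-- Forward difference of a polynomial: `(Δf)(X) = f(X+1) − f(X)`. -/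
def fdiff (S : Polynomial ℂ) : Polynomial ℂ := S.comp (X + 1) - S

/-- `S(X) = R(X−1)·X`. -/
def Spol (R : Polynomial ℂ) : Polynomial ℂ := R.comp (X - 1) * X

lemma semiconj_aeval (A B C : E) (h : A * B = C * A) (f : Polynomial ℂ) :
    A * aeval B f = aeval C f * A := by
  induction f using Polynomial.induction_on with
  | C a => simp [Algebra.commutes]
  | add p q hp hq => simp [map_add, mul_add, add_mul, hp, hq]
  | monomial n a ih =>
      have e1 : aeval B (Polynomial.C a * X ^ (n + 1)) = aeval B (Polynomial.C a * X ^ n) * B := by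
        simp [pow_succ, mul_assoc]
      have e2 : aeval C (Polynomial.C a * X ^ (n + 1)) = aeval C (Polynomial.C a * X ^ n) * C := by
        simp [pow_succ, mul_assoc]
      rw [e1, e2, ← mul_assoc, ih, mul_assoc, h, ← mul_assoc]

lemma ZY : Zop * Yop = Yop * Zop + 1 := by
  refine LinearMap.ext fun p => ?_
  simp [Zop, Yop, Module.End.mul_apply, Polynomial.derivative_mul]
  ring

lemma HY : Hop * Yop = Yop * (Hop + 1) := by
  rw [Hop, mul_assoc, ZY]

lemma ZH : Zop * Hop = (Hop + 1) * Zop := by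
  rw [Hop, ← mul_assoc, ZY]

lemma Y_aeval (f : Polynomial ℂ) : Yop * aeval Hop f = aeval (Hop - 1) f * Yop := by
  have h1 : Yop * (Hop + 1) = Hop * Yop := HY.symm
  have e1 : (aeval (Hop + 1)) (X - 1 : Polynomial ℂ) = Hop := by simp
  have e2 : (aeval Hop) (X - 1 : Polynomial ℂ) = Hop - 1 := by simp
  have := semiconj_aeval Yop (Hop + 1) Hop h1 (f.comp (X - 1))
  rwa [aeval_comp, aeval_comp, e1, e2] at this

theorem commutation_relations (R : Polynomial ℂ) (d : ℕ) (hR : R.natDegree = d) :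
    Hop * Yop - Yop * Hop = Yop ∧
    Hop * Gop R - Gop R * Hop = -(Gop R) ∧
    Gop R * Yop - Yop * Gop R
      = aeval Hop R * (Hop + 1) - aeval (Hop - 1) R * Hop ∧
    Gop R * Yop - Yop * Gop R = aeval Hop (fdiff (Spol R)) := by
  have comm1 : Hop * Yop - Yop * Hop = Yop := by rw [HY]; noncomm_ring
  have hcomm : Hop * aeval Hop R = aeval Hop R * Hop :=
    semiconj_aeval Hop Hop Hop rfl R
  have comm2 : Hop * Gop R - Gop R * Hop = -(Gop R) := by
    rw [Gop, mul_assoc, ZH, ← mul_assoc, ← mul_assoc, hcomm]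
    noncomm_ring
  have key3 : Gop R * Yop - Yop * Gop R
      = aeval Hop R * (Hop + 1) - aeval (Hop - 1) R * Hop := by
    have e1 : Gop R * Yop = aeval Hop R * (Hop + 1) := by
      rw [Gop, mul_assoc, ZY, ← Hop]
    have e2 : Yop * Gop R = aeval (Hop - 1) R * Hop := by
      rw [Gop, ← mul_assoc, Y_aeval, mul_assoc, ← Hop]
    rw [e1, e2]
  refine ⟨comm1, comm2, key3, ?_⟩
  rw [key3]
  have eval_S : ∀ t : E, aeval t (Spol R) = aeval (t - 1) R * t := by
    intro t
    rw [Spol, map_mul, aeval_comp, aeval_X, map_sub, aeval_X, aeval_one]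
  rw [fdiff, map_sub, aeval_comp, map_add, aeval_X, aeval_one, eval_S, eval_S,
    add_sub_cancel_right]

end
end

section
/- With Y multiplication by x, Z the formal derivative on ℂ[x], H = Y∘Z, and G = R(H)∘Z for a fixed polynomial R of degree d: for every polynomial q ∈ ℂ[X] with q(0) = 0 and deg q = l ≥ 1, there exist polynomials γ_0, …, γ_{ld+l−1} ∈ ℂ[X] such that e^{ad_{q(G)}}(Y) = Y + Σ_{j=0}^{ld+l−1} γ_j(H)∘G^j. -/
open Polynomial Finset

noncomputable section

/-- `ad_A(B) = A∘B − B∘A`. -/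
def ad (A : E) : E → E := fun B => A * B - B * A

/-!
On the monomials `xⁿ` the operator `H` acts diagonally with eigenvalue `n`, and `G` lowers the
degree by one; hence `G ∘ f(H) = f(H + 1) ∘ G` and `[G, Y] = S(H)` with
`S(t) = (t + 1) R(t) - t R(t - 1)`, a polynomial of degree at most `d`.
Since `[Gⁱ, f(H) ∘ Gʲ] = (f(H + i) - f(H)) ∘ Gⁱ⁺ʲ` and a finite difference lowers the degree,
`ad_{q(G)}` maps the span of the `f(H) ∘ Gʲ` with `j < n`, `deg f < k` into the span with
`j < n + l`, `deg f < k - 1`. As `ad_{q(G)} Y` lies in the span with `j < l`, `deg f ≤ d`, the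
iterates `ad_{q(G)}^{m+1} Y` lie in the span with `j < (m + 1) l`, `deg f ≤ d - m`: they vanish
for `m > d`, and the exponential series is `Y` plus an element of the span with `j < (d + 1) l`.
-/

theorem degree_taylor_sub_lt {K : Type*} [CommRing K] {f : K[X]} (hf : f ≠ 0) (a : K) :
    (taylor a f - f).degree < f.degree := by
  simpa only [degree_taylor] using degree_sub_lt_left (degree_taylor f a)
    ((taylor_eq_zero a f).not.mpr hf) (leadingCoeff_taylor a f)

theorem taylor_mem_degreeLT {K : Type*} [CommRing K] {k : ℕ} {f : K[X]}
    (hf : f ∈ degreeLT K k) (a : K) : taylor a f ∈ degreeLT K k := by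
  rwa [mem_degreeLT, degree_taylor, ← mem_degreeLT]

theorem taylor_sub_mem_degreeLT {K : Type*} [CommRing K] {k : ℕ} {f : K[X]}
    (hf : f ∈ degreeLT K k) (a : K) : taylor a f - f ∈ degreeLT K (k - 1) := by
  rcases eq_or_ne f 0 with rfl | hf0
  · simp
  rw [mem_degreeLT, degree_eq_natDegree hf0, Nat.cast_lt] at hf
  rw [mem_degreeLT]
  refine (degree_taylor_sub_lt hf0 a).trans_le ?_
  rw [degree_eq_natDegree hf0]
  exact_mod_cast Nat.le_sub_one_of_lt hf

attribute [local instance] LieRing.ofAssociativeRing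

theorem ad_apply (A B : E) : ad A B = ⁅A, B⁆ := rfl

theorem ext_X_pow {A B : E} (h : ∀ n : ℕ, A (X ^ n) = B (X ^ n)) : A = B :=
  lhom_ext' fun n => LinearMap.ext fun c => by
    simp only [LinearMap.comp_apply, ← C_mul_X_pow_eq_monomial, ← smul_eq_C_mul, map_smul, h]

theorem Yop_apply_X_pow (n : ℕ) : Yop (X ^ n) = X ^ (n + 1) := by
  rw [Yop, LinearMap.mulLeft_apply, pow_succ']

theorem Hop_apply_X_pow (n : ℕ) : Hop (X ^ n) = (n : ℂ) • X ^ n := by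
  cases n with
  | zero => simp [Hop, Zop]
  | succ n =>
    rw [Hop, Module.End.mul_apply, Zop, derivative_X_pow, ← smul_eq_C_mul, map_smul,
      Nat.add_sub_cancel, Yop_apply_X_pow]

theorem aeval_Hop_apply_X_pow (f : ℂ[X]) (n : ℕ) :
    aeval Hop f (X ^ n) = f.eval (n : ℂ) • X ^ n :=
  Module.End.aeval_apply_of_mem_apply_eq_smul (Hop_apply_X_pow n)

theorem Gop_apply_one (R : ℂ[X]) : Gop R 1 = 0 := by
  simp [Gop, Zop]

theorem Gop_apply_X_pow_succ (R : ℂ[X]) (n : ℕ) :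
    Gop R (X ^ (n + 1)) = ((n + 1 : ℂ) * R.eval (n : ℂ)) • X ^ n := by
  rw [Gop, Module.End.mul_apply, Zop, derivative_X_pow, ← smul_eq_C_mul, map_smul,
    Nat.add_sub_cancel, aeval_Hop_apply_X_pow, smul_smul, Nat.cast_succ]

theorem Gop_mul_aeval_Hop (R f : ℂ[X]) :
    Gop R * aeval Hop f = aeval Hop (taylor 1 f) * Gop R := by
  refine ext_X_pow fun n => ?_
  cases n with
  | zero =>
    rw [Module.End.mul_apply, Module.End.mul_apply, aeval_Hop_apply_X_pow, map_smul, pow_zero,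
      Gop_apply_one, smul_zero, map_zero]
  | succ n =>
    simp only [Module.End.mul_apply, Gop_apply_X_pow_succ, aeval_Hop_apply_X_pow, map_smul,
      smul_smul, taylor_eval]
    push_cast
    ring_nf

theorem Gop_pow_mul_aeval_Hop (R f : ℂ[X]) (k : ℕ) :
    Gop R ^ k * aeval Hop f = aeval Hop (taylor (k : ℂ) f) * Gop R ^ k := by
  induction k generalizing f with
  | zero => simp
  | succ k ih =>
    rw [pow_succ, mul_assoc, Gop_mul_aeval_Hop, ← mul_assoc, ih, mul_assoc, ← pow_succ,
      taylor_taylor, Nat.cast_succ]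

/-- `S(t) = (t + 1) R(t) - t R(t - 1)`, written so that the cancellation of the leading terms is
visible. -/
def commGY (R : ℂ[X]) : ℂ[X] := (R - taylor (-1) R) * X + R

theorem lie_Gop_Yop (R : ℂ[X]) : ⁅Gop R, Yop⁆ = aeval Hop (commGY R) := by
  refine ext_X_pow fun n => ?_
  simp only [Ring.lie_def, LinearMap.sub_apply, Module.End.mul_apply, Yop_apply_X_pow,
    Gop_apply_X_pow_succ, aeval_Hop_apply_X_pow, commGY]
  cases n with
  | zero => simp [Gop_apply_one]
  | succ n =>
    simp only [Gop_apply_X_pow_succ, map_smul, Yop_apply_X_pow, ← sub_smul, eval_add, eval_mul,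
      eval_sub, eval_X, taylor_eval]
    push_cast
    ring_nf

theorem commGY_mem_degreeLT {R : ℂ[X]} {d : ℕ} (hR : R.natDegree ≤ d) :
    commGY R ∈ degreeLT ℂ (d + 1) := by
  have hR' : R ∈ degreeLT ℂ (d + 1) := by
    rw [degreeLT_succ_eq_degreeLE, mem_degreeLE]
    exact natDegree_le_iff_degree_le.mp hR
  have hdiff : R - taylor (-1) R ∈ degreeLT ℂ d := by
    simpa using neg_mem (taylor_sub_mem_degreeLT hR' (-1))
  refine add_mem ?_ hR'
  rw [mem_degreeLT] at hdiff ⊢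
  rw [degree_mul_X, Nat.cast_succ]
  exact WithBot.add_lt_add_right WithBot.one_ne_bot hdiff

theorem lie_Gop_pow_aeval_Hop_mul (R f : ℂ[X]) (i j : ℕ) :
    ⁅Gop R ^ i, aeval Hop f * Gop R ^ j⁆ =
      aeval Hop (taylor (i : ℂ) f - f) * Gop R ^ (i + j) := by
  rw [Ring.lie_def, ← mul_assoc, Gop_pow_mul_aeval_Hop, mul_assoc, mul_assoc, ← pow_add,
    ← pow_add, add_comm j i, ← sub_mul, map_sub]

def spanHG (R : ℂ[X]) (n k : ℕ) : Submodule ℂ E :=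
  Submodule.span ℂ {A | ∃ j < n, ∃ f ∈ degreeLT ℂ k, aeval Hop f * Gop R ^ j = A}

section spanHG

variable {R : ℂ[X]} {n k : ℕ} {A : E}

theorem spanHG_mono {n' k' : ℕ} (hn : n ≤ n') (hk : k ≤ k') : spanHG R n k ≤ spanHG R n' k' :=
  Submodule.span_mono fun _ ⟨j, hj, f, hf, hA⟩ => ⟨j, hj.trans_le hn, f, degreeLT_mono hk hf, hA⟩

theorem spanHG_zero_right : spanHG R n 0 = ⊥ := by
  rw [spanHG, Submodule.span_eq_bot]
  rintro _ ⟨j, -, f, hf, rfl⟩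
  rw [mem_degreeLT, Nat.cast_zero, Nat.WithBot.lt_zero_iff, degree_eq_bot] at hf
  rw [hf, map_zero, zero_mul]

theorem exists_eq_sum_of_mem_spanHG (hA : A ∈ spanHG R n k) :
    ∃ γ : ℕ → ℂ[X], A = ∑ j ∈ range n, aeval Hop (γ j) * Gop R ^ j := by
  induction hA using Submodule.span_induction with
  | mem A hA =>
    obtain ⟨j, hj, f, -, rfl⟩ := hA
    refine ⟨Pi.single j f, ?_⟩
    rw [sum_eq_single_of_mem j (mem_range.mpr hj) fun i _ hij => by simp [hij], Pi.single_eq_same]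
  | zero => exact ⟨0, by simp⟩
  | add A B _ _ hA hB =>
    obtain ⟨γ, rfl⟩ := hA
    obtain ⟨δ, rfl⟩ := hB
    exact ⟨γ + δ, by simp only [Pi.add_apply, map_add, add_mul, sum_add_distrib]⟩
  | smul c A _ hA =>
    obtain ⟨γ, rfl⟩ := hA
    exact ⟨c • γ, by simp only [Pi.smul_apply, map_smul, smul_mul_assoc, smul_sum]⟩

theorem Gop_mul_mem_spanHG (hA : A ∈ spanHG R n k) : Gop R * A ∈ spanHG R (n + 1) k := by
  induction hA using Submodule.span_induction with
  | mem A hA =>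
    obtain ⟨j, hj, f, hf, rfl⟩ := hA
    rw [← mul_assoc, Gop_mul_aeval_Hop, mul_assoc, ← pow_succ']
    exact Submodule.subset_span ⟨j + 1, by omega, _, taylor_mem_degreeLT hf 1, rfl⟩
  | zero => rw [mul_zero]; exact zero_mem _
  | add A B _ _ hA hB => rw [mul_add]; exact add_mem hA hB
  | smul c A _ hA => rw [mul_smul_comm]; exact Submodule.smul_mem _ c hA

theorem lie_aeval_Gop_mem_spanHG {q : ℂ[X]} {l : ℕ} (hq : q.natDegree ≤ l)
    (hA : A ∈ spanHG R n k) : ⁅aeval (Gop R) q, A⁆ ∈ spanHG R (n + l) (k - 1) := by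
  induction hA using Submodule.span_induction with
  | mem A hA =>
    obtain ⟨j, hj, f, hf, rfl⟩ := hA
    rw [aeval_eq_sum_range' (Nat.lt_succ_of_le hq), sum_lie]
    refine Submodule.sum_mem _ fun i hi => ?_
    rw [smul_lie, lie_Gop_pow_aeval_Hop_mul]
    have hij : i + j < n + l := by have := mem_range.mp hi; omega
    exact Submodule.smul_mem _ _
      (Submodule.subset_span ⟨i + j, hij, _, taylor_sub_mem_degreeLT hf _, rfl⟩)
  | zero => rw [lie_zero]; exact zero_mem _
  | add A B _ _ hA hB => rw [lie_add]; exact add_mem hA hB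
  | smul c A _ hA => rw [lie_smul]; exact Submodule.smul_mem _ c hA

end spanHG

section iterate

variable {R q : ℂ[X]} {d l : ℕ}

theorem lie_Gop_pow_Yop_mem_spanHG (hR : R.natDegree ≤ d) (k : ℕ) :
    ⁅Gop R ^ k, Yop⁆ ∈ spanHG R k (d + 1) := by
  induction k with
  | zero => rw [pow_zero, Ring.lie_def, one_mul, mul_one, sub_self]; exact zero_mem _
  | succ k ih =>
    have hsplit :
        ⁅Gop R ^ (k + 1), Yop⁆ = Gop R * ⁅Gop R ^ k, Yop⁆ + ⁅Gop R, Yop⁆ * Gop R ^ k := by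
      simp only [Ring.lie_def, pow_succ', mul_sub, sub_mul, mul_assoc]
      abel
    rw [hsplit, lie_Gop_Yop]
    exact add_mem (Gop_mul_mem_spanHG ih)
      (Submodule.subset_span ⟨k, k.lt_succ_self, _, commGY_mem_degreeLT hR, rfl⟩)

theorem lie_aeval_Gop_Yop_mem_spanHG (hR : R.natDegree ≤ d) (hq : q.natDegree ≤ l) :
    ⁅aeval (Gop R) q, Yop⁆ ∈ spanHG R l (d + 1) := by
  rw [aeval_eq_sum_range' (Nat.lt_succ_of_le hq), sum_lie]
  refine Submodule.sum_mem _ fun i hi => ?_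
  rw [smul_lie]
  exact Submodule.smul_mem _ _ (spanHG_mono (Nat.lt_succ_iff.mp (mem_range.mp hi)) le_rfl
    (lie_Gop_pow_Yop_mem_spanHG hR i))

theorem iterate_ad_aeval_Gop_Yop_mem_spanHG (hR : R.natDegree ≤ d) (hq : q.natDegree ≤ l)
    (m : ℕ) : (ad (aeval (Gop R) q))^[m + 1] Yop ∈ spanHG R ((m + 1) * l) (d + 1 - m) := by
  induction m with
  | zero => simpa [ad_apply] using lie_aeval_Gop_Yop_mem_spanHG hR hq
  | succ m ih =>
    rw [Function.iterate_succ_apply', ad_apply]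
    convert lie_aeval_Gop_mem_spanHG hq ih using 2
    · ring
    · omega

theorem iterate_ad_aeval_Gop_Yop_eq_zero (hR : R.natDegree ≤ d) (hq : q.natDegree ≤ l) {m : ℕ}
    (hm : d + 2 ≤ m) : (ad (aeval (Gop R) q))^[m] Yop = 0 := by
  obtain ⟨m, rfl⟩ : ∃ m', m = m' + 1 := ⟨m - 1, by omega⟩
  have := iterate_ad_aeval_Gop_Yop_mem_spanHG hR hq m
  rwa [show d + 1 - m = 0 by omega, spanHG_zero_right, Submodule.mem_bot] at this

end iterate

theorem exp_ad_qG_on_Y_general (R : Polynomial ℂ) (d : ℕ) (hR : R.natDegree = d)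
    (q : Polynomial ℂ) (l : ℕ) (hql : q.natDegree = l) :
    ∃ γ : ℕ → Polynomial ℂ,
      ∀ N : ℕ, d + 2 ≤ N →
        ∑ j ∈ range N, (j.factorial : ℂ)⁻¹ • (ad (aeval (Gop R) q))^[j] Yop
          = Yop + ∑ j ∈ range (l * d + l), aeval Hop (γ j) * Gop R ^ j := by
  set adq := ad (aeval (Gop R) q)
  have hmem : ∑ m ∈ range (d + 1), ((m + 1).factorial : ℂ)⁻¹ • adq^[m + 1] Yop
      ∈ spanHG R (l * d + l) (d + 1) := by
    refine Submodule.sum_mem _ fun m hm => Submodule.smul_mem _ _ (spanHG_mono ?_ (by omega)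
      (iterate_ad_aeval_Gop_Yop_mem_spanHG hR.le hql.le m))
    have := mem_range.mp hm
    nlinarith
  obtain ⟨γ, hγ⟩ := exists_eq_sum_of_mem_spanHG hmem
  refine ⟨γ, fun N hN => ?_⟩
  rw [← sum_subset (range_subset_range.mpr hN) fun j _ hj => ?_, sum_range_succ', hγ]
  · simp [add_comm]
  · rw [iterate_ad_aeval_Gop_Yop_eq_zero hR.le hql.le (not_lt.mp (mt mem_range.mpr hj)), smul_zero]

/-- `e^{ad_{q(G)}}(Y) = Y + Σ_{j=0}^{ld+l−1} γ_j(H)∘G^j` for some polynomials `γ_j`,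
where the exponential series is the (stabilized) finite sum. -/
theorem exp_ad_qG_on_Y (R : Polynomial ℂ) (d : ℕ) (hR : R.natDegree = d)
    (q : Polynomial ℂ) (hq0 : q.eval 0 = 0) (l : ℕ) (hl : 1 ≤ l)
    (hql : q.natDegree = l) :
    ∃ γ : ℕ → Polynomial ℂ,
      ∀ N : ℕ, d + 2 ≤ N →
        ∑ j ∈ range N, (j.factorial : ℂ)⁻¹ • (ad (aeval (Gop R) q))^[j] Yop
          = Yop + ∑ j ∈ range (l * d + l), aeval Hop (γ j) * Gop R ^ j :=
  exp_ad_qG_on_Y_general R d hR q l hql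

end
end

section
/- With Y multiplication by x, Z the formal derivative on ℂ[x], H = Y∘Z, G = R(H)∘Z for a fixed polynomial R of degree d, and q ∈ ℂ[X] a polynomial with q(0) = 0 and deg q = l ≥ 1: the operator q(G) strictly lowers the degree of every nonzero polynomial, so that for every p ∈ ℂ[x] the series e^{q(G)}p = Σ_{j≥0} q(G)^j p / j! is a finite sum defining a linear operator e^{q(G)} on ℂ[x]; moreover for every n ∈ ℕ the polynomial P_n^q = e^{q(G)}(x^n) is a monic polynomial of degree n. -/
open Polynomial Finset

noncomputable section

/-- subalgebra of degree-nonincreasing endomorphisms -/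
def degLE : Subalgebra ℂ E where
  carrier := {f | ∀ p : Polynomial ℂ, (f p).degree ≤ p.degree}
  mul_mem' := fun {f g} hf hg p => le_trans (hf (g p)) (hg p)
  add_mem' := fun {f g} hf hg p =>
    le_trans (degree_add_le _ _) (max_le (hf p) (hg p))
  one_mem' := fun p => le_refl _
  zero_mem' := fun p => by simp
  algebraMap_mem' := fun c p => by
    simpa [Module.algebraMap_end_apply] using degree_smul_le c p

lemma aeval_mem_degLE (T : E) (hT : T ∈ degLE) (s : Polynomial ℂ) :
    aeval T s ∈ degLE := by
  have h1 : Algebra.adjoin ℂ ({T} : Set E) ≤ degLE :=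
    Algebra.adjoin_le (by simpa using hT)
  exact h1 (Polynomial.aeval_mem_adjoin_singleton ℂ T)

lemma Hop_mem : Hop ∈ degLE := by
  intro p
  show ((X : Polynomial ℂ) * derivative p).degree ≤ p.degree
  by_cases hp : derivative p = 0
  · simp [hp]
  · have hp0 : p ≠ 0 := fun h => hp (by simp [h])
    have h1 : (derivative p).degree < p.degree := degree_derivative_lt hp0
    calc ((X : Polynomial ℂ) * derivative p).degree
        = (derivative p).degree + 1 := by
          rw [mul_comm, degree_mul_X]
      _ ≤ p.degree := by
          have h2 : (derivative p).natDegree + 1 ≤ p.natDegree :=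
            natDegree_lt_natDegree hp h1
          rw [degree_eq_natDegree hp, degree_eq_natDegree hp0]
          exact_mod_cast h2

lemma Gop_strict (R : Polynomial ℂ) (p : Polynomial ℂ) (hp : p ≠ 0) :
    ((Gop R) p).degree < p.degree := by
  have h1 : ((Gop R) p) = (aeval Hop R) (derivative p) := rfl
  have h2 := aeval_mem_degLE Hop Hop_mem R (derivative p)
  rw [h1]
  exact lt_of_le_of_lt h2 (degree_derivative_lt hp)

lemma Gop_mem (R : Polynomial ℂ) : Gop R ∈ degLE := by
  intro p
  by_cases hp : p = 0
  · simp [hp]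
  · exact le_of_lt (Gop_strict R p hp)

section Main
variable (R q : Polynomial ℂ) (hq0 : q.eval 0 = 0)

lemma qG_strict (hq0 : q.eval 0 = 0) (p : Polynomial ℂ) (hp : p ≠ 0) :
    ((aeval (Gop R) q) p).degree < p.degree := by
  have hq : (X : Polynomial ℂ) * q.divX = q := by
    have := X_mul_divX_add q
    rwa [coeff_zero_eq_eval_zero, hq0, map_zero, add_zero] at this
  have h1 : aeval (Gop R) q = Gop R * aeval (Gop R) q.divX := by
    conv_lhs => rw [← hq]
    rw [map_mul, aeval_X]
  rw [h1]
  have h2 := aeval_mem_degLE (Gop R) (Gop_mem R) q.divX p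
  show ((Gop R) ((aeval (Gop R) q.divX) p)).degree < p.degree
  by_cases hz : (aeval (Gop R) q.divX) p = 0
  · rw [hz, map_zero]
    simpa [degree_eq_bot, Ne, bot_lt_iff_ne_bot] using
      (bot_lt_iff_ne_bot.mpr (fun h => hp (degree_eq_bot.mp h)))
  · exact lt_of_lt_of_le (Gop_strict R _ hz) h2

lemma qG_pow_zero (hq0 : q.eval 0 = 0) :
    ∀ j : ℕ, ∀ p : Polynomial ℂ, p.natDegree < j → ((aeval (Gop R) q) ^ j) p = 0 := by
  intro j
  induction j with
  | zero => intro p hp; omega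
  | succ j ih =>
    intro p hp
    rw [pow_succ, Module.End.mul_apply]
    by_cases hz : (aeval (Gop R) q) p = 0
    · rw [hz, map_zero]
    · have hp0 : p ≠ 0 := fun h => hz (by rw [h, map_zero])
      have h1 := qG_strict R q hq0 p hp0
      have h2 : ((aeval (Gop R) q) p).natDegree < p.natDegree :=
        natDegree_lt_natDegree hz h1
      exact ih _ (by omega)

lemma qG_pow_strict (hq0 : q.eval 0 = 0) :
    ∀ j : ℕ, ∀ p : Polynomial ℂ, p ≠ 0 →
      (((aeval (Gop R) q) ^ (j + 1)) p).degree < p.degree := by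
  intro j
  induction j with
  | zero => intro p hp; simpa using qG_strict R q hq0 p hp
  | succ j ih =>
    intro p hp
    rw [pow_succ', Module.End.mul_apply]
    by_cases hz : ((aeval (Gop R) q) ^ (j + 1)) p = 0
    · rw [hz, map_zero]
      exact bot_lt_iff_ne_bot.mpr (fun h => hp (degree_eq_bot.mp h))
    · exact lt_trans (qG_strict R q hq0 _ hz) (ih p hp)

end Main

/-- `P_n^q = e^{q(G)}(x^n)`, the exponential series being a finite sum
(all terms with `j > n` vanish). -/
def Pq (R q : Polynomial ℂ) (n : ℕ) : Polynomial ℂ :=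
  ∑ j ∈ range (n + 1), (j.factorial : ℂ)⁻¹ • ((aeval (Gop R) q) ^ j) (X ^ n : Polynomial ℂ)

theorem qG_lowers_degree_and_Pq_monic (R : Polynomial ℂ) (d : ℕ) (hR : R.natDegree = d)
    (q : Polynomial ℂ) (hq0 : q.eval 0 = 0) (l : ℕ) (hl : 1 ≤ l)
    (hql : q.natDegree = l) :
    (∀ p : Polynomial ℂ, p ≠ 0 → ((aeval (Gop R) q) p).degree < p.degree) ∧
    (∀ p : Polynomial ℂ, ∀ N : ℕ, p.natDegree + 1 ≤ N →
      ∑ j ∈ range N, (j.factorial : ℂ)⁻¹ • ((aeval (Gop R) q) ^ j) p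
        = ∑ j ∈ range (p.natDegree + 1), (j.factorial : ℂ)⁻¹ • ((aeval (Gop R) q) ^ j) p) ∧
    (∀ n : ℕ, (Pq R q n).Monic ∧ (Pq R q n).natDegree = n) := by
  refine ⟨qG_strict R q hq0, ?_, ?_⟩
  · intro p N hN
    apply (Finset.sum_subset (Finset.range_subset_range.mpr hN) ?_).symm
    intro j _ hj
    rw [Finset.mem_range, not_lt] at hj
    rw [qG_pow_zero R q hq0 j p (by omega), smul_zero]
  · intro n
    have hsplit : Pq R q n
        = (∑ j ∈ range n, ((j + 1).factorial : ℂ)⁻¹ •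
            ((aeval (Gop R) q) ^ (j + 1)) (X ^ n : Polynomial ℂ)) + X ^ n := by
      rw [Pq, Finset.sum_range_succ']
      simp
    set r := ∑ j ∈ range n, ((j + 1).factorial : ℂ)⁻¹ •
      ((aeval (Gop R) q) ^ (j + 1)) (X ^ n : Polynomial ℂ) with hr
    have hdr : r.degree < (n : WithBot ℕ) := by
      apply lt_of_le_of_lt (degree_sum_le _ _)
      rw [Finset.sup_lt_iff (by exact WithBot.bot_lt_coe n)]
      intro j _
      apply lt_of_le_of_lt (degree_smul_le _ _)
      have := qG_pow_strict R q hq0 j (X ^ n : Polynomial ℂ) (by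
        exact pow_ne_zero n X_ne_zero)
      rwa [degree_X_pow] at this
    have hdeg : (Pq R q n).degree = (n : WithBot ℕ) := by
      rw [hsplit, degree_add_eq_right_of_degree_lt (by rwa [degree_X_pow]),
        degree_X_pow]
    constructor
    · rw [hsplit]
      exact (monic_X_pow n).add_of_right (by rwa [degree_X_pow])
    · exact natDegree_eq_of_degree_eq_some hdeg
end
end

section
/- With Y multiplication by x, Z the formal derivative on ℂ[x], H = Y∘Z, G = R(H)∘Z for a fixed polynomial R of degree d, and P_n^R = e^G(x^n): the polynomials P_n^R are eigenfunctions of the differential operator L = H + G = x·d/dx + R(x·d/dx)∘d/dx, namely L(P_n^R) = n·P_n^R for every n ∈ ℕ. -/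
open Polynomial Finset

noncomputable section

/-- `P_n^R = e^G(x^n)`, the exponential series being a finite sum
(all terms with `j > n` vanish). -/
def PR (R : Polynomial ℂ) (n : ℕ) : Polynomial ℂ :=
  ∑ j ∈ range (n + 1), (j.factorial : ℂ)⁻¹ • ((Gop R) ^ j) (X ^ n : Polynomial ℂ)

lemma HZ : Hop * Zop = Zop * Hop - Zop := by
  have : Zop * Hop = Hop * Zop + Zop := by
    rw [Hop, ← mul_assoc, ZY, add_mul, one_mul]
  rw [this]; abel

lemma commHaeval (R : Polynomial ℂ) : Commute Hop (aeval Hop R) := by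
  induction R using Polynomial.induction_on' with
  | add p q hp hq => simpa [map_add] using hp.add_right hq
  | monomial i a =>
    rw [aeval_monomial]
    have h1 : Commute Hop (algebraMap ℂ E a) := (Algebra.commutes a Hop).symm
    exact h1.mul_right ((Commute.refl Hop).pow_right i)

lemma HG (R : Polynomial ℂ) : Hop * Gop R = Gop R * Hop - Gop R := by
  rw [Gop, ← mul_assoc, (commHaeval R).eq, mul_assoc, HZ, mul_sub, ← mul_assoc]

lemma HGpow (R : Polynomial ℂ) (j : ℕ) :
    Hop * (Gop R) ^ j = (Gop R) ^ j * Hop - (j : ℕ) • (Gop R) ^ j := by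
  induction j with
  | zero => simp
  | succ j ih =>
    calc Hop * (Gop R) ^ (j + 1) = (Hop * (Gop R) ^ j) * Gop R := by
          rw [pow_succ, ← mul_assoc]
      _ = ((Gop R) ^ j * Hop - (j : ℕ) • (Gop R) ^ j) * Gop R := by rw [ih]
      _ = (Gop R) ^ j * (Hop * Gop R) - (j : ℕ) • (Gop R) ^ (j + 1) := by
          rw [sub_mul, smul_mul_assoc, mul_assoc, pow_succ]
      _ = (Gop R) ^ j * (Gop R * Hop - Gop R) - (j : ℕ) • (Gop R) ^ (j + 1) := by rw [HG]
      _ = (Gop R) ^ (j + 1) * Hop - ((j : ℕ) + 1) • (Gop R) ^ (j + 1) := by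
          rw [mul_sub, ← mul_assoc, ← pow_succ, add_smul, one_smul]
          abel
      _ = (Gop R) ^ (j + 1) * Hop - ((j + 1 : ℕ) : ℕ) • (Gop R) ^ (j + 1) := by norm_num

lemma H_Xpow (n : ℕ) : Hop ((X : Polynomial ℂ) ^ n) = (n : ℂ) • (X ^ n : Polynomial ℂ) := by
  rw [Hop, Module.End.mul_apply]
  show Yop (derivative (X ^ n)) = _
  rw [derivative_X_pow, Yop, LinearMap.mulLeft_apply, smul_eq_C_mul]
  cases n with
  | zero => simp
  | succ n =>
    push_cast
    ring

lemma aevalH_Xpow (R : Polynomial ℂ) (m : ℕ) :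
    (aeval Hop R) ((X : Polynomial ℂ) ^ m) = (R.eval (m : ℂ)) • (X ^ m : Polynomial ℂ) := by
  induction R using Polynomial.induction_on' with
  | add p q hp hq => simp [map_add, hp, hq, add_smul]
  | monomial i a =>
    have hpow : ∀ k : ℕ, (Hop ^ k) ((X : Polynomial ℂ) ^ m)
        = ((m : ℂ) ^ k) • (X ^ m : Polynomial ℂ) := by
      intro k
      induction k with
      | zero => simp
      | succ k ih =>
        rw [pow_succ, Module.End.mul_apply, H_Xpow, map_smul, ih, smul_smul, pow_succ]
        ring_nf
    rw [aeval_monomial, Module.End.mul_apply, hpow, map_smul, Module.algebraMap_end_apply,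
      eval_monomial, smul_smul, mul_comm]

lemma G_Xpow (R : Polynomial ℂ) (m : ℕ) :
    ∃ c : ℂ, Gop R ((X : Polynomial ℂ) ^ m) = c • (X ^ (m - 1) : Polynomial ℂ) := by
  cases m with
  | zero => exact ⟨0, by simp [Gop, Zop, Module.End.mul_apply]⟩
  | succ m =>
    refine ⟨((m : ℂ) + 1) * R.eval (m : ℂ), ?_⟩
    rw [Gop, Module.End.mul_apply]
    show (aeval Hop R) (derivative (X ^ (m + 1))) = _
    rw [derivative_X_pow, Nat.add_sub_cancel, ← smul_eq_C_mul, map_smul, aevalH_Xpow,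
      smul_smul]
    push_cast
    ring_nf

lemma Gpow_Xpow (R : Polynomial ℂ) (n j : ℕ) :
    ∃ c : ℂ, ((Gop R) ^ j) ((X : Polynomial ℂ) ^ n) = c • (X ^ (n - j) : Polynomial ℂ) := by
  induction j with
  | zero => exact ⟨1, by simp⟩
  | succ j ih =>
    obtain ⟨c, hc⟩ := ih
    obtain ⟨c', hc'⟩ := G_Xpow R (n - j)
    refine ⟨c * c', ?_⟩
    rw [pow_succ', Module.End.mul_apply, hc, map_smul, hc', smul_smul]
    congr 2

lemma Gpow_zero (R : Polynomial ℂ) (n : ℕ) :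
    ((Gop R) ^ (n + 1)) ((X : Polynomial ℂ) ^ n) = 0 := by
  obtain ⟨c, hc⟩ := Gpow_Xpow R n n
  rw [pow_succ', Module.End.mul_apply, hc, map_smul, Nat.sub_self, pow_zero]
  have h1 : Gop R (1 : Polynomial ℂ) = 0 := by
    rw [Gop, Module.End.mul_apply]
    show (aeval Hop R) (derivative 1) = 0
    simp
  rw [h1, smul_zero]

/-- The polynomials `P_n^R` are eigenfunctions of `L = H + G` with eigenvalue `n`. -/
theorem PR_eigenfunction (R : Polynomial ℂ) (d : ℕ) (hR : R.natDegree = d) (n : ℕ) :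
    (Hop + Gop R) (PR R n) = (n : ℂ) • PR R n := by
  set S : ℕ → Polynomial ℂ := fun j => ((Gop R) ^ j) ((X : Polynomial ℂ) ^ n) with hS
  have hHS : ∀ j, Hop (S j) = (n : ℂ) • S j - (j : ℂ) • S j := by
    intro j
    have h := congrArg (fun (T : E) => T ((X : Polynomial ℂ) ^ n)) (HGpow R j)
    simp only [Module.End.mul_apply, LinearMap.sub_apply, LinearMap.smul_apply] at h
    show Hop (((Gop R) ^ j) ((X : Polynomial ℂ) ^ n)) = _
    rw [h, H_Xpow, map_smul]
    simp [hS, Nat.cast_smul_eq_nsmul]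
  have hGS : ∀ j, Gop R (S j) = S (j + 1) := by
    intro j
    show Gop R (((Gop R) ^ j) _) = ((Gop R) ^ (j+1)) _
    rw [pow_succ', Module.End.mul_apply]
  have key : (Hop + Gop R) (PR R n)
      = ∑ j ∈ range (n + 1), (j.factorial : ℂ)⁻¹ •
          (((n : ℂ) • S j - (j : ℂ) • S j) + S (j + 1)) := by
    rw [PR, map_sum]
    refine Finset.sum_congr rfl fun j _ => ?_
    rw [map_smul, LinearMap.add_apply]
    show _ • (Hop (S j) + Gop R (S j)) = _
    rw [hHS, hGS]
  rw [key]
  have cancel : ∑ j ∈ range (n + 1), (j.factorial : ℂ)⁻¹ • S (j + 1)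
      = ∑ j ∈ range (n + 1), (j.factorial : ℂ)⁻¹ • ((j : ℂ) • S j) := by
    rw [Finset.sum_range_succ, Finset.sum_range_succ']
    have h0 : S (n + 1) = 0 := Gpow_zero R n
    rw [h0, smul_zero, add_zero]
    simp only [Nat.cast_zero, zero_smul, smul_zero, add_zero]
    refine Finset.sum_congr rfl fun j _ => ?_
    rw [smul_smul]
    congr 1
    have hne : ((j : ℂ) + 1) ≠ 0 := by exact_mod_cast (Nat.succ_ne_zero j)
    push_cast [Nat.factorial_succ]
    rw [mul_inv, mul_comm (((j : ℂ) + 1))⁻¹, mul_assoc, inv_mul_cancel₀ hne, mul_one]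
  calc ∑ j ∈ range (n + 1), (j.factorial : ℂ)⁻¹ •
          (((n : ℂ) • S j - (j : ℂ) • S j) + S (j + 1))
      = ∑ j ∈ range (n + 1), ((j.factorial : ℂ)⁻¹ • ((n : ℂ) • S j)
          - (j.factorial : ℂ)⁻¹ • ((j : ℂ) • S j)
          + (j.factorial : ℂ)⁻¹ • S (j + 1)) := by
        refine Finset.sum_congr rfl fun j _ => ?_
        rw [smul_add, smul_sub]
    _ = (n : ℂ) • PR R n := by
        rw [Finset.sum_add_distrib, Finset.sum_sub_distrib, cancel, sub_add_cancel, PR,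
          Finset.smul_sum]
        refine Finset.sum_congr rfl fun j _ => ?_
        rw [smul_smul, smul_smul, mul_comm]


end
end

section
/- With Y multiplication by x, Z the formal derivative on ℂ[x], H = Y∘Z, G = R(H)∘Z for a fixed polynomial R of degree d, S(X) = R(X−1)·X, and P_n^R = e^G(x^n) (with the convention P_m^R = 0 for m < 0): the polynomials P_n^R satisfy the (d+2)-term recurrence relation x·P_n^R = P_{n+1}^R + Σ_{j=1}^{d+1} c_j(n)·P_{n−j+1}^R, where c_j(n) = ((−1)^j / j!) · (∏_{k=1}^{j−1} (n−k+1)·R(n−k)) · (Δ^j S)(n−j+1) and Δ^j S denotes the j-th iterated forward difference (ΔS)(X) = S(X+1) − S(X). -/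
open Polynomial Finset

noncomputable section

/-- `P_m^R` extended to integer indices by `P_m^R = 0` for `m < 0`. -/
def PRz (R : Polynomial ℂ) (m : ℤ) : Polynomial ℂ :=
  if m < 0 then 0 else PR R m.toNat

/-- The recurrence coefficient
`c_j(n) = ((−1)^j / j!) · (∏_{k=1}^{j−1} (n−k+1)·R(n−k)) · (Δ^j S)(n−j+1)`. -/
def cCoeff (R : Polynomial ℂ) (j n : ℕ) : ℂ :=
  ((-1 : ℂ) ^ j / (j.factorial : ℂ))
    * (∏ k ∈ Icc 1 (j - 1), (((n : ℂ) - k + 1) * R.eval ((n : ℂ) - k)))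
    * (fdiff^[j] (Spol R)).eval ((n : ℂ) - j + 1)

/-!
Since `G (x^m) = S(m) x^(m-1)`, the coefficient of `x^(n-m)` in `P_n^R` is
`(1/m!) ∏_{k<m} S(n-k)`. Comparing coefficients of `x^(n+1-m)` and cancelling the common factor
`(1/m!) ∏_{k<m-1} S(n-k)`, the recurrence becomes Newton's backward-difference expansion
`S(n+1-m) = Σ_j (-1)^j C(m,j) (Δ^j S)(n+1-j)`, which stops at `j = d+1` because `deg S ≤ d+1`.
-/

open scoped Nat
open fwdDiff

section BackwardNewton

variable {M G : Type*} [AddCommGroup M] [AddCommGroup G]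

lemma fwdDiff_neg_iter_apply (h : M) (f : M → G) (k : ℕ) (y : M) :
    Δ_[-h] ^[k] f y = (-1 : ℤ) ^ k • Δ_[h] ^[k] f (y - k • h) := by
  induction k generalizing y with
  | zero => simp
  | succ k ih =>
    have e₁ : y + -h - k • h = y - (k + 1) • h := by rw [add_smul, one_smul]; abel
    have e₂ : y - (k + 1) • h + h = y - k • h := by rw [add_smul, one_smul]; abel
    rw [Function.iterate_succ_apply', Function.iterate_succ_apply', fwdDiff, fwdDiff, ih, ih,
      e₁, e₂, ← smul_sub, pow_succ, mul_neg_one, neg_smul, ← smul_neg, neg_sub]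

theorem shift_sub_eq_sum_fwdDiff_iter (h : M) (f : M → G) (n : ℕ) (y : M) :
    f (y - n • h) =
      ∑ k ∈ range (n + 1), ((-1 : ℤ) ^ k * n.choose k) • Δ_[h] ^[k] f (y - k • h) := by
  rw [sub_eq_add_neg, ← smul_neg, shift_eq_sum_fwdDiff_iter (-h) f n y]
  refine sum_congr rfl fun k _ => ?_
  rw [fwdDiff_neg_iter_apply, mul_comm ((-1 : ℤ) ^ k), mul_smul, natCast_zsmul]

end BackwardNewton

lemma Polynomial.eval_sub_natCast_eq_sum_fwdDiff_iter {K : Type*} [CommRing K] {p : K[X]} {D : ℕ}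
    (hp : p.natDegree ≤ D) (w : K) (m : ℕ) :
    p.eval (w - m) = p.eval w +
      ∑ j ∈ Icc 1 D, (-1) ^ j * m.choose j * Δ_[1] ^[j] p.eval (w - j) := by
  set f : ℕ → K := fun j => (-1) ^ j * m.choose j * Δ_[1] ^[j] p.eval (w - j)
  have hnewton : p.eval (w - m) = ∑ j ∈ range (m + 1), f j := by
    simpa [f, zsmul_eq_mul] using shift_sub_eq_sum_fwdDiff_iter 1 p.eval m w
  have hf_high_m : ∀ j ≥ m + 1, f j = 0 := fun j hj => by
    simp [f, Nat.choose_eq_zero_of_lt (Nat.lt_of_succ_le hj)]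
  have hf_high_D : ∀ j ≥ D + 1, f j = 0 := fun j hj => by
    simp [f, fwdDiff_iter_eq_zero_of_degree_lt (hp.trans_lt hj)]
  rw [hnewton, ← eventually_constant_sum hf_high_m (n := m + D + 1) (by omega),
    eventually_constant_sum hf_high_D (by omega), range_eq_Ico,
    sum_eq_sum_Ico_succ_bot (Nat.succ_pos _), ← Ico_add_one_right_eq_Icc]
  simp [f]

lemma eval_fdiff_iterate (p : ℂ[X]) (j : ℕ) (x : ℂ) :
    (fdiff^[j] p).eval x = Δ_[1] ^[j] p.eval x := by
  induction j generalizing x with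
  | zero => rfl
  | succ j ih =>
    rw [Function.iterate_succ_apply', Function.iterate_succ_apply', fwdDiff, ← ih, ← ih]
    simp [fdiff, eval_comp]

lemma natDegree_Spol_le {R : ℂ[X]} {d : ℕ} (hR : R.natDegree ≤ d) :
    (Spol R).natDegree ≤ d + 1 := by
  refine natDegree_mul_le.trans (add_le_add ?_ natDegree_X_le)
  have hX : (X - 1 : ℂ[X]).natDegree = 1 := by simpa using natDegree_X_sub_C (1 : ℂ)
  rw [natDegree_comp, hX, mul_one]
  exact hR

lemma eval_Spol_zero (R : ℂ[X]) : (Spol R).eval 0 = 0 := by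
  simp [Spol]

lemma Hop_X_pow (m : ℕ) : Hop (X ^ m) = (m : ℂ) • X ^ m := by
  rcases m with _ | m
  · simp [Hop, Zop]
  · simp [Hop, Yop, Zop, smul_eq_C_mul]
    ring

lemma Gop_X_pow (R : ℂ[X]) (m : ℕ) :
    Gop R (X ^ m) = (Spol R).eval (m : ℂ) • X ^ (m - 1) := by
  rcases m with _ | m
  · simp [Gop, Zop, eval_Spol_zero]
  · rw [Gop, Module.End.mul_apply, Zop, derivative_X_pow, ← smul_eq_C_mul, map_smul,
      Module.End.aeval_apply_of_mem_apply_eq_smul (Hop_X_pow _), smul_smul]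
    simp [Spol, eval_comp, mul_comm]

lemma Gop_pow_X_pow (R : ℂ[X]) (j n : ℕ) :
    (Gop R ^ j) (X ^ n) = (∏ k ∈ range j, (Spol R).eval ((n : ℂ) - k)) • X ^ (n - j) := by
  induction j generalizing n with
  | zero => simp
  | succ j ih =>
    rw [pow_succ, Module.End.mul_apply, Gop_X_pow, map_smul, ih, smul_smul,
      prod_range_succ' (fun k => (Spol R).eval ((n : ℂ) - k)),
      Nat.sub_sub, add_comm 1 j]
    rcases n with _ | n
    · simp [eval_Spol_zero]
    · rw [mul_comm, Nat.add_sub_cancel, Nat.cast_zero, sub_zero]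
      congr 3 with k
      push_cast
      ring_nf

/-- The coefficient of `x^(n-m)` in `P_n^R` at `z = n`; a complex `z` keeps shifted indices free of
truncated subtraction, and the factor `S(0) = 0` makes it vanish for `m > n`. -/
def PRcoeff (R : ℂ[X]) (z : ℂ) (m : ℕ) : ℂ :=
  (m ! : ℂ)⁻¹ * ∏ k ∈ range m, (Spol R).eval (z - k)

section Coefficients

variable (R : ℂ[X])

lemma PRcoeff_eq_zero_of_lt {n m : ℕ} (h : n < m) : PRcoeff R n m = 0 := by
  rw [PRcoeff, prod_eq_zero (mem_range.mpr h) (by rw [sub_self, eval_Spol_zero]), mul_zero]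

lemma PR_eq_sum (n : ℕ) : PR R n = ∑ m ∈ range (n + 1), PRcoeff R n m • X ^ (n - m) := by
  refine sum_congr rfl fun m _ => ?_
  rw [Gop_pow_X_pow, smul_smul, PRcoeff]

lemma X_mul_PR (n : ℕ) :
    X * PR R n = ∑ m ∈ range (n + 2), PRcoeff R n m • X ^ (n + 1 - m) := by
  rw [PR_eq_sum, mul_sum, sum_range_succ _ (n + 1), PRcoeff_eq_zero_of_lt R n.lt_succ_self,
    zero_smul, add_zero]
  refine sum_congr rfl fun m hm => ?_
  rw [mul_smul_comm, ← pow_succ', Nat.sub_add_comm (mem_range_succ_iff.mp hm)]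

lemma PRz_natCast (n : ℕ) : PRz R n = PR R n := by
  simp [PRz]

lemma PRz_sub_eq_sum (N j : ℕ) :
    PRz R ((N : ℤ) - j) = ∑ m ∈ range (N + 1),
      (if j ≤ m then PRcoeff R ((N : ℂ) - j) (m - j) else 0) • X ^ (N - m) := by
  simp only [ite_smul, zero_smul, ← sum_filter]
  by_cases hj : j ≤ N
  · have hfilter : (range (N + 1)).filter (j ≤ ·) = Ico j (N + 1) := by
      ext m; simp; omega
    rw [PRz, if_neg (by omega), hfilter, sum_Ico_eq_sum_range, Nat.sub_add_comm hj]
    rw [show ((N : ℤ) - j).toNat = N - j by omega, PR_eq_sum, Nat.cast_sub hj]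
    refine sum_congr rfl fun i _ => ?_
    rw [Nat.add_sub_cancel_left, Nat.sub_sub]
  · have hfilter : (range (N + 1)).filter (j ≤ ·) = ∅ := by
      ext m; simp; omega
    rw [PRz, if_pos (by omega), hfilter, sum_empty]

lemma cCoeff_eq (j n : ℕ) :
    cCoeff R j n = (-1) ^ j / (j ! : ℂ) * (∏ k ∈ range (j - 1), (Spol R).eval ((n : ℂ) - k))
      * Δ_[1] ^[j] (Spol R).eval ((n : ℂ) + 1 - j) := by
  have hIcc : Icc 1 (j - 1) = Ico 1 j := by ext; simp; omega
  rw [cCoeff, hIcc, prod_Ico_eq_prod_range, eval_fdiff_iterate, sub_add_eq_add_sub]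
  congr 3 with k
  simp only [Spol, eval_mul, eval_comp, eval_sub, eval_X, eval_one]
  push_cast
  ring_nf

lemma cCoeff_mul_PRcoeff {j m : ℕ} (hj : 1 ≤ j) (hjm : j ≤ m) (n : ℕ) :
    cCoeff R j n * PRcoeff R ((n : ℂ) + 1 - j) (m - j)
      = (m ! : ℂ)⁻¹ * (∏ k ∈ range (m - 1), (Spol R).eval ((n : ℂ) - k))
        * ((-1) ^ j * m.choose j * Δ_[1] ^[j] (Spol R).eval ((n : ℂ) + 1 - j)) := by
  have hprod : (∏ k ∈ range (j - 1), (Spol R).eval ((n : ℂ) - k))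
      * ∏ k ∈ range (m - j), (Spol R).eval ((n : ℂ) + 1 - j - k)
        = ∏ k ∈ range (m - 1), (Spol R).eval ((n : ℂ) - k) := by
    rw [show m - 1 = (j - 1) + (m - j) by omega, prod_range_add]
    congr 2 with k
    rw [Nat.cast_add, Nat.cast_sub hj]
    ring_nf
  have hm : (m ! : ℂ) ≠ 0 := mod_cast Nat.factorial_ne_zero m
  rw [cCoeff_eq, PRcoeff, ← hprod, Nat.cast_choose ℂ hjm]
  field_simp

lemma PRcoeff_recurrence {d : ℕ} (hR : R.natDegree ≤ d) (n m : ℕ) :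
    PRcoeff R n m = PRcoeff R ((n : ℂ) + 1) m + ∑ j ∈ Icc 1 (d + 1),
      cCoeff R j n * (if j ≤ m then PRcoeff R ((n : ℂ) + 1 - j) (m - j) else 0) := by
  rcases m with _ | m
  · simp [PRcoeff]
  set Q := ∏ k ∈ range m, (Spol R).eval ((n : ℂ) - k)
  have hterm : ∀ j ∈ Icc 1 (d + 1),
      cCoeff R j n * (if j ≤ m + 1 then PRcoeff R ((n : ℂ) + 1 - j) (m + 1 - j) else 0)
        = ((m + 1) ! : ℂ)⁻¹ * Q
          * ((-1) ^ j * (m + 1).choose j * Δ_[1] ^[j] (Spol R).eval ((n : ℂ) + 1 - j)) := by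
    intro j hj
    split_ifs with hjm
    · exact cCoeff_mul_PRcoeff R (mem_Icc.mp hj).1 hjm n
    · simp [Nat.choose_eq_zero_of_lt (not_le.mp hjm)]
  have hleft : PRcoeff R n (m + 1)
      = ((m + 1) ! : ℂ)⁻¹ * Q * (Spol R).eval ((n : ℂ) + 1 - (m + 1 : ℕ)) := by
    rw [PRcoeff, prod_range_succ, ← mul_assoc]
    congr 2
    push_cast
    ring
  have hright : PRcoeff R ((n : ℂ) + 1) (m + 1)
      = ((m + 1) ! : ℂ)⁻¹ * Q * (Spol R).eval ((n : ℂ) + 1) := by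
    rw [PRcoeff, prod_range_succ', Nat.cast_zero, sub_zero, ← mul_assoc]
    congr 2
    refine prod_congr rfl fun k _ => ?_
    push_cast
    ring_nf
  rw [sum_congr rfl hterm, ← mul_sum, hleft, hright,
    (Spol R).eval_sub_natCast_eq_sum_fwdDiff_iter (natDegree_Spol_le hR), mul_add]

end Coefficients

/-- The `(d+2)`-term recurrence relation
`x·P_n^R = P_{n+1}^R + Σ_{j=1}^{d+1} c_j(n)·P_{n−j+1}^R`. -/
theorem PR_recurrence (R : Polynomial ℂ) (d : ℕ) (hR : R.natDegree = d) (n : ℕ) :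
    X * PRz R n = PRz R (n + 1)
      + ∑ j ∈ Icc 1 (d + 1), cCoeff R j n • PRz R ((n : ℤ) - j + 1) := by
  have hshift (j : ℕ) : (n : ℤ) - j + 1 = ((n + 1 : ℕ) : ℤ) - j := by push_cast; ring
  have hsucc : (n : ℤ) + 1 = ((n + 1 : ℕ) : ℤ) := by push_cast; rfl
  rw [PRz_natCast, X_mul_PR, hsucc, PRz_natCast, PR_eq_sum]
  simp_rw [hshift, PRz_sub_eq_sum, smul_sum, smul_smul]
  rw [sum_comm, ← sum_add_distrib]
  refine sum_congr rfl fun m _ => ?_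
  rw [PRcoeff_recurrence R hR.le n m, add_smul, sum_smul]
  push_cast
  rfl
end
end
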